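/- In the block setting on ℝᵈ with q blocks, fix a block j, let λ > 0, let F : ℝᵈ → ℝ be differentiable at x*, and for each block k let Ω_k : ℝᵈ → ℝ satisfy Ω_k(x) = Ω_k(proj_k x), Ω_k(t z) = t Ω_k(z) for all t ≥ 0, and the triangle inequality Ω_k(z + w) ≤ Ω_k(z) + Ω_k(w). Suppose x* minimizes P(x) = F(x) + λ Σ_{k∈Fin q} Ω_k(x) over ℝᵈ. Then: (i) ⟨−∇F(x*), proj_j x*⟩ = λ Ω_j(proj_j x*); and (ii) ⟨−∇F(x*), z⟩ ≤ λ Ω_j(z) for every z with proj_j z = z. -/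

import Mathlib

open RealInnerProductSpace Finset

/-- Block-`j` restriction of a vector: keep the coordinates assigned to block `j`
by the block assignment `β`, zero elsewhere. -/
noncomputable def blockProj {d q : ℕ} (β : Fin d → Fin q) (j : Fin q)
    (x : EuclideanSpace ℝ (Fin d)) : EuclideanSpace ℝ (Fin d) :=
  WithLp.toLp 2 (fun i => if β i = j then x i else 0)

lemma blockProj_add {d q : ℕ} (β : Fin d → Fin q) (k : Fin q)
    (x y : EuclideanSpace ℝ (Fin d)) :
    blockProj β k (x + y) = blockProj β k x + blockProj β k y := by
  ext i
  simp only [blockProj, PiLp.add_apply, PiLp.toLp_apply]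
  split <;> simp

lemma blockProj_smul {d q : ℕ} (β : Fin d → Fin q) (k : Fin q) (t : ℝ)
    (x : EuclideanSpace ℝ (Fin d)) :
    blockProj β k (t • x) = t • blockProj β k x := by
  ext i
  simp only [blockProj, PiLp.smul_apply, smul_eq_mul, PiLp.toLp_apply]
  split <;> simp

lemma blockProj_proj_ne {d q : ℕ} (β : Fin d → Fin q) {k j : Fin q} (hkj : k ≠ j)
    (x : EuclideanSpace ℝ (Fin d)) :
    blockProj β k (blockProj β j x) = 0 := by
  ext i
  simp only [blockProj, PiLp.toLp_apply]
  by_cases h : β i = k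
  · simp [h, hkj, PiLp.zero_apply]
  · simp [h, PiLp.zero_apply]

lemma blockProj_idem {d q : ℕ} (β : Fin d → Fin q) (j : Fin q)
    (x : EuclideanSpace ℝ (Fin d)) :
    blockProj β j (blockProj β j x) = blockProj β j x := by
  ext i
  simp only [blockProj, PiLp.toLp_apply]
  split <;> simp_all

/-- If `F x ≤ F (x + t • v) + t * c` for small positive `t`, then the directional
derivative inequality `0 ≤ ⟪∇F x, v⟫ + c` holds. -/
lemma dirderiv_key {E : Type*} [NormedAddCommGroup E] [InnerProductSpace ℝ E]
    [CompleteSpace E]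
    (F : E → ℝ) (x v : E) (c : ℝ) (hdiff : DifferentiableAt ℝ F x)
    (h : ∀ t : ℝ, 0 < t → t ≤ 1 → F x ≤ F (x + t • v) + t * c) :
    0 ≤ ⟪gradient F x, v⟫ + c := by
  set g : ℝ → ℝ := fun t => F (x + t • v) + t * c with hg
  have hline : HasDerivAt (fun t : ℝ => x + t • v) v 0 := by
    simpa using ((hasDerivAt_id (0:ℝ)).smul_const v).const_add x
  have hF : HasFDerivAt F (InnerProductSpace.toDual ℝ E (gradient F x)) x :=
    hdiff.hasGradientAt.hasFDerivAt
  have hF' : HasFDerivAt F (InnerProductSpace.toDual ℝ E (gradient F x))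
      ((fun t : ℝ => x + t • v) 0) := by simpa using hF
  have hcomp : HasDerivAt (fun t : ℝ => F (x + t • v)) (⟪gradient F x, v⟫) 0 := by
    have := hF'.comp_hasDerivAt (0 : ℝ) hline
    simpa [InnerProductSpace.toDual_apply_apply, Function.comp_def] using this
  have hgderiv : HasDerivAt g (⟪gradient F x, v⟫ + c) 0 := by
    simpa [hg, Pi.add_def] using hcomp.add ((hasDerivAt_id (0:ℝ)).mul_const c)
  have hslope := hasDerivAt_iff_tendsto_slope.mp hgderiv
  have hslope' : Filter.Tendsto (slope g 0) (nhdsWithin 0 (Set.Ioi 0))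
      (nhds (⟪gradient F x, v⟫ + c)) :=
    hslope.mono_left (nhdsWithin_mono _ (fun t ht => ne_of_gt ht))
  refine ge_of_tendsto hslope' ?_
  filter_upwards [Ioc_mem_nhdsGT_of_mem (by simp : (0:ℝ) ∈ Set.Ico 0 1)] with t ht
  have ht0 : 0 < t := ht.1
  have hgt : g 0 ≤ g t := by
    have := h t ht0 ht.2
    simpa [g] using this
  have : 0 ≤ (g t - g 0) / (t - 0) := by
    apply div_nonneg (by linarith) (by linarith)
  simpa [slope_def_field, div_eq_inv_mul] using this

/-- Fermat's condition and the optimality conditions (3)–(4) of the paper: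
(i) saturation of the dual correlation along the block-`j` component of the
optimum, and (ii) blockwise dual feasibility. -/
theorem adsgd_optimality_conditions {d q : ℕ} (hd : 0 < d) (hq : 0 < q)
    (β : Fin d → Fin q) (j : Fin q)
    (lam : ℝ) (hlam : 0 < lam)
    (F : EuclideanSpace ℝ (Fin d) → ℝ)
    (Ωb : Fin q → EuclideanSpace ℝ (Fin d) → ℝ)
    (hblock : ∀ k x, Ωb k x = Ωb k (blockProj β k x))
    (hhomog : ∀ k (t : ℝ), 0 ≤ t → ∀ z, Ωb k (t • z) = t * Ωb k z)
    (htri : ∀ k (z w : EuclideanSpace ℝ (Fin d)), Ωb k (z + w) ≤ Ωb k z + Ωb k w)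
    (P : EuclideanSpace ℝ (Fin d) → ℝ)
    (hP : P = fun x => F x + lam * ∑ k, Ωb k x)
    (xstar : EuclideanSpace ℝ (Fin d))
    (hdiff : DifferentiableAt ℝ F xstar)
    (hmin : ∀ y, P xstar ≤ P y) :
    ⟪-gradient F xstar, blockProj β j xstar⟫ = lam * Ωb j (blockProj β j xstar) ∧
      ∀ z, blockProj β j z = z → ⟪-gradient F xstar, z⟫ ≤ lam * Ωb j z := by
  subst hP
  replace hmin : ∀ y, F xstar + lam * ∑ k, Ωb k xstar ≤ F y + lam * ∑ k, Ωb k y :=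
    fun y => hmin y
  -- For k ≠ j and z supported on block j, Ωb k is unchanged by adding t • z
  have hunchanged : ∀ (k : Fin q), k ≠ j → ∀ (z : EuclideanSpace ℝ (Fin d)),
      blockProj β j z = z → ∀ (w : EuclideanSpace ℝ (Fin d)),
      Ωb k (w + z) = Ωb k w := by
    intro k hkj z hz w
    rw [hblock k (w + z), blockProj_add, ← hz, blockProj_proj_ne β hkj,
      add_zero, ← hblock]
  -- Part (ii)
  have part2 : ∀ z, blockProj β j z = z → ⟪-gradient F xstar, z⟫ ≤ lam * Ωb j z := by
    intro z hz
    have key := dirderiv_key F xstar z (lam * Ωb j z) hdiff ?_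
    · have e1 : (⟪-gradient F xstar, z⟫ : ℝ) = -⟪gradient F xstar, z⟫ := by
        simp [inner_neg_left]
      linarith
    intro t ht0 ht1
    have hmin' := hmin (xstar + t • z)
    have htz : blockProj β j (t • z) = t • z := by
      rw [blockProj_smul, hz]
    have hsum : ∑ k, Ωb k (xstar + t • z) ≤ (∑ k, Ωb k xstar) + t * Ωb j z := by
      have : ∀ k, Ωb k (xstar + t • z) ≤
          Ωb k xstar + (if k = j then t * Ωb j z else 0) := by
        intro k
        by_cases hkj : k = j
        · subst hkj
          simp only [if_pos rfl]
          calc Ωb k (xstar + t • z) ≤ Ωb k xstar + Ωb k (t • z) := htri k _ _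
            _ = Ωb k xstar + t * Ωb k z := by rw [hhomog k t ht0.le]
        · rw [hunchanged k hkj (t • z) htz xstar]
          simp [hkj]
      calc ∑ k, Ωb k (xstar + t • z) ≤
          ∑ k, (Ωb k xstar + (if k = j then t * Ωb j z else 0)) :=
            Finset.sum_le_sum (fun k _ => this k)
        _ = (∑ k, Ωb k xstar) + t * Ωb j z := by
            rw [Finset.sum_add_distrib]; simp
    have : F xstar + lam * ∑ k, Ωb k xstar ≤
        F (xstar + t • z) + lam * ((∑ k, Ωb k xstar) + t * Ωb j z) := by
      refine le_trans hmin' ?_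
      have := mul_le_mul_of_nonneg_left hsum hlam.le
      linarith
    nlinarith
  refine ⟨?_, part2⟩
  set p := blockProj β j xstar with hp
  have hpfix : blockProj β j p = p := blockProj_idem β j xstar
  have hle : ⟪-gradient F xstar, p⟫ ≤ lam * Ωb j p := part2 p hpfix
  -- reverse inequality via perturbation xstar - t • p
  have key := dirderiv_key F xstar (-p) (-(lam * Ωb j p)) hdiff ?_
  · have e1 : (⟪-gradient F xstar, p⟫ : ℝ) = -⟪gradient F xstar, p⟫ := by
      simp [inner_neg_left]
    have e2 : (⟪gradient F xstar, -p⟫ : ℝ) = -⟪gradient F xstar, p⟫ := by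
      simp [inner_neg_right]
    rw [e1] at hle ⊢
    rw [e2] at key
    linarith
  intro t ht0 ht1
  have hmin' := hmin (xstar + t • (-p))
  have hΩjx : Ωb j xstar = Ωb j p := hblock j xstar
  have hsum : ∑ k, Ωb k (xstar + t • (-p)) =
      (∑ k, Ωb k xstar) - t * Ωb j p := by
    have hnegp : blockProj β j (-p) = -p := by
      have : (-p : EuclideanSpace ℝ (Fin d)) = (-1 : ℝ) • p := by
        ext i; simp
      rw [this, blockProj_smul, hpfix]
    have htp : blockProj β j (t • (-p)) = t • (-p) := by
      rw [blockProj_smul, hnegp]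
    have : ∀ k, Ωb k (xstar + t • (-p)) =
        Ωb k xstar - (if k = j then t * Ωb j p else 0) := by
      intro k
      by_cases hkj : k = j
      · subst hkj
        have hyproj : blockProj β k (xstar + t • (-p)) = (1 - t) • p := by
          rw [blockProj_add, htp, ← hp]
          ext i
          simp only [PiLp.add_apply, PiLp.smul_apply, PiLp.neg_apply, smul_eq_mul]
          ring
        rw [hblock k (xstar + t • (-p)), hyproj, hhomog k (1 - t) (by linarith),
          if_pos rfl, hΩjx]
        ring
      · rw [hunchanged k hkj (t • (-p)) htp xstar]
        simp [hkj]
    calc ∑ k, Ωb k (xstar + t • (-p)) =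
        ∑ k, (Ωb k xstar - (if k = j then t * Ωb j p else 0)) :=
          Finset.sum_congr rfl (fun k _ => this k)
      _ = (∑ k, Ωb k xstar) - t * Ωb j p := by
          rw [Finset.sum_sub_distrib]; simp
  have : F xstar + lam * ∑ k, Ωb k xstar ≤
      F (xstar + t • (-p)) + lam * ((∑ k, Ωb k xstar) - t * Ωb j p) := by
    rw [← hsum]; exact hmin'
  nlinarith
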